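/- For complex numbers γ and γ̃ with γ̃, γ real and γ̃² < 1 + γ², the two roots λ± = e^{iα}(γ̃ ± i√(1+γ² − γ̃²))/(1 + iγ) of the polynomial ρ(ζ) = e^{−iα}(1+iγ)ζ² − 2γ̃ζ + e^{iα}(1−iγ) both have modulus 1. -/

import Mathlib

/-!
Write `d = 1 + iγ` and `w = e^{iα}`, so that `ρ(ζ) = w⁻¹ d ζ² - 2γ̃ ζ + w d̄`. Substituting
`ζ = w z / d` gives `ρ(ζ) = (w / d) (z² - 2γ̃ z + |d|²)`. Both numerators `z = γ̃ ± i√(|d|² - γ̃²)`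
have real part `γ̃` and modulus `|d|`, and every complex `z` is a root of
`X² - 2 (Re z) X + |z|²`. The same equality `|z| = |d|` makes `|ζ| = 1`.
-/

open Complex ComplexConjugate

namespace Complex

theorem sq_sub_two_re_mul_add_normSq (z : ℂ) : z ^ 2 - 2 * z.re * z + normSq z = 0 := by
  rw [← mul_conj, re_eq_add_conj]
  ring

variable {w d z : ℂ}

theorem norm_mul_div_eq_one (hw : ‖w‖ = 1) (hd : d ≠ 0) (hz : normSq z = normSq d) :
    ‖w * (z / d)‖ = 1 := by
  have hnorm : ‖z‖ = ‖d‖ := by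
    simpa only [normSq_eq_norm_sq, sq_eq_sq₀ (norm_nonneg _) (norm_nonneg _)] using hz
  rw [norm_mul, norm_div, hw, hnorm, div_self (norm_ne_zero_iff.mpr hd), one_mul]

theorem inv_mul_mul_sq_sub_add_conj_eq_zero (hw : w ≠ 0) (hd : d ≠ 0)
    (hz : normSq z = normSq d) :
    w⁻¹ * d * (w * (z / d)) ^ 2 - 2 * z.re * (w * (z / d)) + w * conj d = 0 := by
  have hfactor : w⁻¹ * d * (w * (z / d)) ^ 2 - 2 * z.re * (w * (z / d)) + w * conj d
      = w / d * (z ^ 2 - 2 * z.re * z + normSq z) := by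
    rw [hz, ← mul_conj]
    field_simp
  rw [hfactor, sq_sub_two_re_mul_add_normSq, mul_zero]

end Complex

open Complex in
theorem stmt_5 (α γ γt : ℝ) (h : γt ^ 2 < 1 + γ ^ 2)
    (lamP lamM : ℂ)
    (hP : lamP = Complex.exp (I * α) *
      (((γt : ℂ) + I * (Real.sqrt (1 + γ ^ 2 - γt ^ 2) : ℝ)) / (1 + I * (γ : ℂ))))
    (hM : lamM = Complex.exp (I * α) *
      (((γt : ℂ) - I * (Real.sqrt (1 + γ ^ 2 - γt ^ 2) : ℝ)) / (1 + I * (γ : ℂ))))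
    (ρ : ℂ → ℂ)
    (hρ : ρ = fun ζ => Complex.exp (-(I * α)) * (1 + I * (γ : ℂ)) * ζ ^ 2
      - 2 * (γt : ℂ) * ζ + Complex.exp (I * α) * (1 - I * (γ : ℂ))) :
    ‖lamP‖ = 1 ∧ ‖lamM‖ = 1 ∧ ρ lamP = 0 ∧ ρ lamM = 0 := by
  set s := Real.sqrt (1 + γ ^ 2 - γt ^ 2)
  have hs : s ^ 2 = 1 + γ ^ 2 - γt ^ 2 := Real.sq_sqrt (by linarith)
  have hw : ‖exp (I * α)‖ = 1 := by rw [mul_comm]; exact norm_exp_ofReal_mul_I α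
  have hd : 1 + I * (γ : ℂ) ≠ 0 := fun h0 => by simpa using congrArg re h0
  have hdsq : normSq (1 + I * (γ : ℂ)) = 1 + γ ^ 2 := by
    rw [mul_comm, ← ofReal_one, normSq_add_mul_I, one_pow]
  have hρ' : ∀ ζ, ρ ζ = (exp (I * α))⁻¹ * (1 + I * γ) * ζ ^ 2 - 2 * (γt : ℂ) * ζ
      + exp (I * α) * conj (1 + I * γ) := by
    intro ζ; simp [hρ, exp_neg, sub_eq_add_neg]
  have root : ∀ z : ℂ, z.re = γt → normSq z = 1 + γ ^ 2 →
      ‖exp (I * α) * (z / (1 + I * γ))‖ = 1 ∧ ρ (exp (I * α) * (z / (1 + I * γ))) = 0 := by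
    intro z hre hz
    rw [← hdsq] at hz
    refine ⟨norm_mul_div_eq_one hw hd hz, ?_⟩
    rw [hρ', ← hre]
    exact inv_mul_mul_sq_sub_add_conj_eq_zero (exp_ne_zero _) hd hz
  have hre : (γt + I * s : ℂ).re = γt := by simp
  have hsq : normSq (γt + I * s) = 1 + γ ^ 2 := by
    rw [mul_comm, normSq_add_mul_I]; linarith
  have hconj : (γt - I * s : ℂ) = conj (γt + I * s) := by simp [sub_eq_add_neg]
  obtain ⟨hPnorm, hProot⟩ := root _ hre hsq
  obtain ⟨hMnorm, hMroot⟩ := root _ (by rwa [conj_re]) (by rwa [normSq_conj])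
  rw [← hconj] at hMnorm hMroot
  subst hP hM
  exact ⟨hPnorm, hMnorm, hProot, hMroot⟩
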